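/- Let 𝔫 be the 5-dimensional real Lie algebra l₅,₅ with orthonormal basis {E₁,…,E₅} and non-zero brackets [E₁,E₂] = m·E₄ + s·E₅, [E₁,E₃] = u·E₅, [E₁,E₄] = v·E₅, [E₂,E₃] = w·E₅, where s, u ≥ 0 and m, v, w > 0 (a three-step nilpotent Lie algebra with one-dimensional center). Then there exist c ∈ ℝ and a derivation D of 𝔫 with Ric = c·Id + D if and only if s = 0, u = 0, v = m and w = (√2/2)·m; moreover, in that case necessarily c = −(7/4)m². -/

import Mathlib

/-!
In the basis `E` the Ricci operator is an explicit symmetric matrix, so a nilsoliton derivation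
must be `D = Ric - c • 1`. Testing the derivation identity for `D` on five pairs of basis vectors
gives `m v s = 0`, `m v u = 0` and three linear conditions on `c`:
`2c = -(3m² + w²) = -(3v² + w²) = -(m² + v² + 3w²)` once `s = u = 0`, which force `v = m`,
`w² = m²/2` and `c = -7m²/4`. Conversely, for these parameters `Ric + (7/4) m² • 1` is diagonal
with eigenvalues `(3, 4, 6, 7, 10) · m²/4`, which are additive along the brackets, hence a
derivation.
-/

open scoped BigOperators

namespace Nilsoliton11

noncomputable section

abbrev V : Type := Fin 5 → ℝ

/-- The orthonormal basis vectors E₁,…,E₅ (indexed 0,…,4). -/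
def E (i : Fin 5) : V := Pi.single i 1

/-- The inner product making `E` an orthonormal basis. -/
def ip (x y : V) : ℝ := ∑ i, x i * y i

/-- `D` is a derivation of the bracket `br`. -/
def IsDerivation (br : V → V → V) (D : V →ₗ[ℝ] V) : Prop :=
  ∀ X Y : V, D (br X Y) = br (D X) Y + br X (D Y)

/-- `Ric` is the Ricci operator of the nilpotent Lie group with left-invariant
metric determined by the bracket `br` and the orthonormal basis `E`. -/
def IsRicci (br : V → V → V) (Ric : V →ₗ[ℝ] V) : Prop :=
  ∀ X Y : V, ip (Ric X) Y =
      -(1/2) * (∑ i : Fin 5, ip (br X (E i)) (br Y (E i)))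
      + (1/4) * (∑ i : Fin 5, ∑ j : Fin 5, ip (br (E i) (E j)) X * ip (br (E i) (E j)) Y)

/-- The bracket of l₅,₅: [E₁,E₂] = m·E₄ + s·E₅, [E₁,E₃] = u·E₅,
[E₁,E₄] = v·E₅, [E₂,E₃] = w·E₅. -/
def br (m s u v w : ℝ) (X Y : V) : V :=
  (m * (X 0 * Y 1 - X 1 * Y 0)) • E 3 + (s * (X 0 * Y 1 - X 1 * Y 0) + u * (X 0 * Y 2 - X 2 * Y 0) + v * (X 0 * Y 3 - X 3 * Y 0) + w * (X 1 * Y 2 - X 2 * Y 1)) • E 4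

open Matrix

def ricciMatrix (m s u v w : ℝ) : Matrix (Fin 5) (Fin 5) ℝ :=
  !![-(m^2+s^2+u^2+v^2)/2, -(u*w)/2, s*w/2, 0, 0;
     -(u*w)/2, -(m^2+s^2+w^2)/2, -(s*u)/2, -(s*v)/2, 0;
     s*w/2, -(s*u)/2, -(u^2+w^2)/2, -(u*v)/2, 0;
     0, -(s*v)/2, -(u*v)/2, (m^2-v^2)/2, m*s/2;
     0, 0, 0, m*s/2, (s^2+u^2+v^2+w^2)/2]

lemma ip_E_right (x : V) (i : Fin 5) : ip x (E i) = x i := by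
  simp [ip, E, Pi.single_apply]

lemma IsRicci.eq_toLin' {m s u v w : ℝ} {Ric : V →ₗ[ℝ] V} (hRic : IsRicci (br m s u v w) Ric) :
    Ric = toLin' (ricciMatrix m s u v w) := by
  refine LinearMap.ext fun X => funext fun b => ?_
  rw [← ip_E_right (Ric X) b, hRic X (E b), toLin'_apply]
  fin_cases b <;>
    · simp [br, ip, E, ricciMatrix, mulVec, dotProduct, Fin.sum_univ_five, Pi.single_apply]
      ring

lemma toLin'_eq_smul_id_add_iff {n R : Type*} [Fintype n] [DecidableEq n] [CommRing R]
    {M : Matrix n n R} {c : R} {D : (n → R) →ₗ[R] n → R} :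
    toLin' M = c • LinearMap.id + D ↔ D = toLin' (M - c • 1) := by
  rw [map_sub, map_smul, toLin'_one, eq_sub_iff_add_eq, add_comm, eq_comm]

lemma nilsoliton_equations {m s u v w c : ℝ}
    (hD : IsDerivation (br m s u v w) (toLin' (ricciMatrix m s u v w - c • 1))) :
    m * v * s = 0 ∧ m * v * u = 0 ∧ m * (2 * c + 3 * m^2 + 3 * s^2 + u^2 + w^2) = 0 ∧
      v * (2 * c + 3 * s^2 + 3 * u^2 + 3 * v^2 + w^2) = 0 ∧
      w * (2 * c + m^2 + 3 * s^2 + 3 * u^2 + v^2 + 3 * w^2) = 0 := by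
  have e₁ := congrFun (hD (E 0) (E 4)) 4
  have e₂ := congrFun (hD (E 0) (E 1)) 2
  have e₃ := congrFun (hD (E 0) (E 1)) 3
  have e₄ := congrFun (hD (E 0) (E 3)) 4
  have e₅ := congrFun (hD (E 1) (E 2)) 4
  simp [br, E, ricciMatrix, dotProduct, Fin.sum_univ_five, Pi.single_apply] at e₁ e₂ e₃ e₄ e₅
  refine ⟨?_, ?_, by linear_combination 2 * e₃, by linear_combination 2 * e₄,
    by linear_combination 2 * e₅⟩
  · rcases e₁ with h | h | h <;> simp [h]
  · rcases e₂ with (h | h) | h <;> simp [h]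

lemma sqrt_two_div_two_mul_sq (m : ℝ) : (√2 / 2 * m) ^ 2 = m ^ 2 / 2 := by
  rw [mul_pow, div_pow, Real.sq_sqrt zero_le_two]
  ring

lemma soliton_params_of_equations {m s u v w c : ℝ} (hm : 0 < m) (hv : 0 < v) (hw : 0 < w)
    (h : m * v * s = 0 ∧ m * v * u = 0 ∧ m * (2 * c + 3 * m^2 + 3 * s^2 + u^2 + w^2) = 0 ∧
      v * (2 * c + 3 * s^2 + 3 * u^2 + 3 * v^2 + w^2) = 0 ∧
      w * (2 * c + m^2 + 3 * s^2 + 3 * u^2 + v^2 + 3 * w^2) = 0) :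
    s = 0 ∧ u = 0 ∧ v = m ∧ w = √2 / 2 * m ∧ c = -(7/4) * m ^ 2 := by
  obtain ⟨hs, hu, h₁, h₂, h₃⟩ := h
  have hmv : m * v ≠ 0 := by positivity
  obtain rfl : s = 0 := (mul_eq_zero.1 hs).resolve_left hmv
  obtain rfl : u = 0 := (mul_eq_zero.1 hu).resolve_left hmv
  have e₁ := (mul_eq_zero.1 h₁).resolve_left hm.ne'
  have e₂ := (mul_eq_zero.1 h₂).resolve_left hv.ne'
  have e₃ := (mul_eq_zero.1 h₃).resolve_left hw.ne'
  have hvm : v = m := (pow_left_inj₀ hv.le hm.le two_ne_zero).1 (by linarith)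
  have hwm : w = √2 / 2 * m := by
    refine (pow_left_inj₀ hw.le (by positivity) two_ne_zero).1 ?_
    rw [sqrt_two_div_two_mul_sq]
    linarith
  exact ⟨rfl, rfl, hvm, hwm, by linarith⟩

lemma IsRicci.soliton_params {m s u v w : ℝ} (hm : 0 < m) (hv : 0 < v) (hw : 0 < w)
    {Ric : V →ₗ[ℝ] V} (hRic : IsRicci (br m s u v w) Ric) {c : ℝ} {D : V →ₗ[ℝ] V}
    (hD : IsDerivation (br m s u v w) D) (hEq : Ric = c • LinearMap.id + D) :
    s = 0 ∧ u = 0 ∧ v = m ∧ w = √2 / 2 * m ∧ c = -(7/4) * m ^ 2 := by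
  rw [hRic.eq_toLin', toLin'_eq_smul_id_add_iff] at hEq
  subst hEq
  exact soliton_params_of_equations hm hv hw (nilsoliton_equations hD)

lemma isDerivation_toLin'_diagonal {m v w : ℝ} {d : Fin 5 → ℝ} (h₃ : d 3 = d 0 + d 1)
    (h₄ : d 4 = d 0 + d 3) (h₄' : d 4 = d 1 + d 2) :
    IsDerivation (br m 0 0 v w) (toLin' (diagonal d)) := by
  intro X Y
  funext b
  fin_cases b <;> simp [br, E, mulVec_diagonal]
  · linear_combination m * (X 0 * Y 1 - X 1 * Y 0) * h₃
  · linear_combination v * (X 0 * Y 3 - X 3 * Y 0) * h₄ + w * (X 1 * Y 2 - X 2 * Y 1) * h₄'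

lemma ricciMatrix_sub_smul_one_eq_diagonal {m w : ℝ} (hw : w ^ 2 = m ^ 2 / 2) :
    ricciMatrix m 0 0 m w - (-(7/4) * m ^ 2) • 1 =
      diagonal ![3/4 * m^2, m^2, 3/2 * m^2, 7/4 * m^2, 5/2 * m^2] := by
  ext i j
  fin_cases i <;> fin_cases j <;> simp [ricciMatrix] <;> linarith

lemma exists_soliton_of_params {m w : ℝ} (hw : w ^ 2 = m ^ 2 / 2) {Ric : V →ₗ[ℝ] V}
    (hRic : IsRicci (br m 0 0 m w) Ric) :
    ∃ (c : ℝ) (D : V →ₗ[ℝ] V), IsDerivation (br m 0 0 m w) D ∧ Ric = c • LinearMap.id + D := by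
  refine ⟨-(7/4) * m ^ 2, toLin' (ricciMatrix m 0 0 m w - (-(7/4) * m ^ 2) • 1), ?_, ?_⟩
  · rw [ricciMatrix_sub_smul_one_eq_diagonal hw]
    exact isDerivation_toLin'_diagonal (by simp; ring) (by simp; ring) (by simp; ring)
  · rw [hRic.eq_toLin', toLin'_eq_smul_id_add_iff]

theorem stmt11_general (m s u v w : ℝ) (hm : 0 < m) (hv : 0 < v) (hw : 0 < w)
    (Ric : V →ₗ[ℝ] V) (hRic : IsRicci (br m s u v w) Ric) :
    ((∃ (c : ℝ) (D : V →ₗ[ℝ] V), IsDerivation (br m s u v w) D ∧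
        Ric = c • (LinearMap.id : V →ₗ[ℝ] V) + D) ↔ (s = 0 ∧ u = 0 ∧ v = m ∧ w = (Real.sqrt 2 / 2) * m)) ∧
    (∀ (c : ℝ) (D : V →ₗ[ℝ] V), IsDerivation (br m s u v w) D →
        Ric = c • (LinearMap.id : V →ₗ[ℝ] V) + D → c = -(7/4) * m ^ 2) := by
  refine ⟨⟨?_, ?_⟩, fun c D hD hEq => (hRic.soliton_params hm hv hw hD hEq).2.2.2.2⟩
  · rintro ⟨c, D, hD, hEq⟩
    obtain ⟨hs, hu, hvm, hwm, -⟩ := hRic.soliton_params hm hv hw hD hEq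
    exact ⟨hs, hu, hvm, hwm⟩
  · rintro ⟨rfl, rfl, rfl, rfl⟩
    exact exists_soliton_of_params (sqrt_two_div_two_mul_sq _) hRic

theorem stmt11 (m s u v w : ℝ) (hs : 0 ≤ s) (hu : 0 ≤ u) (hm : 0 < m) (hv : 0 < v) (hw : 0 < w)
    (Ric : V →ₗ[ℝ] V) (hRic : IsRicci (br m s u v w) Ric) :
    ((∃ (c : ℝ) (D : V →ₗ[ℝ] V), IsDerivation (br m s u v w) D ∧
        Ric = c • (LinearMap.id : V →ₗ[ℝ] V) + D) ↔ (s = 0 ∧ u = 0 ∧ v = m ∧ w = (Real.sqrt 2 / 2) * m)) ∧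
    (∀ (c : ℝ) (D : V →ₗ[ℝ] V), IsDerivation (br m s u v w) D →
        Ric = c • (LinearMap.id : V →ₗ[ℝ] V) + D → c = -(7/4) * m ^ 2) :=
  stmt11_general m s u v w hm hv hw Ric hRic

end

end Nilsoliton11
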